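/- arXiv:1211.2316 — 4 statements merged into one kernel-verified Lean document; each statement's English description precedes it below -/
import Mathlib

section
/- If W₁ ⊇ W₂ ⊇ W₃ ⊇ … is a decreasing sequence of closed subsets of ℝⁿ, each of which is a nontrivial max cone (closed under componentwise maximum and multiplication by nonnegative scalars, containing a nonzero vector), then the intersection ⋂ᵢ Wᵢ is a closed max cone containing a nonzero vector. -/
/-!
Normalise: the sets `Wᵢ ∩ {x | maxⱼ xⱼ = 1}` are nonempty (rescale a nonzero vector of `Wᵢ`),
compact and decreasing, so by Cantor's intersection theorem they have a common point, which is nonzero.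
-/

open scoped NNReal

/-- A max cone in `(ℝ≥0)ⁿ`: contains `0`, closed under componentwise maximum
and under multiplication by nonnegative scalars. -/
def MaxCone {n : ℕ} (W : Set (Fin n → ℝ≥0)) : Prop :=
  (0 : Fin n → ℝ≥0) ∈ W ∧
  (∀ x ∈ W, ∀ y ∈ W, x ⊔ y ∈ W) ∧
  (∀ r : ℝ≥0, ∀ x ∈ W, r • x ∈ W)

open Finset

theorem MaxCone.iInter {n : ℕ} {α : Sort*} {W : α → Set (Fin n → ℝ≥0)}
    (hW : ∀ i, MaxCone (W i)) : MaxCone (⋂ i, W i) := by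
  simp only [MaxCone, Set.mem_iInter]
  exact ⟨fun i => (hW i).1, fun x hx y hy i => (hW i).2.1 x (hx i) y (hy i),
    fun r x hx i => (hW i).2.2 r x (hx i)⟩

section SupNorm

variable {ι : Type*} [Fintype ι]

theorem continuous_univ_sup : Continuous fun x : ι → ℝ≥0 => univ.sup x := by
  have h : Continuous (univ.sup fun i (x : ι → ℝ≥0) => x i) :=
    Continuous.finset_sup fun i _ => continuous_apply i
  convert h using 1
  funext x
  simp [Finset.sup_apply]

theorem univ_sup_smul (r : ℝ≥0) (x : ι → ℝ≥0) : univ.sup (r • x) = r * univ.sup x := by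
  rw [NNReal.mul_finset_sup]
  rfl

theorem univ_sup_eq_zero_iff {x : ι → ℝ≥0} : univ.sup x = 0 ↔ x = 0 := by
  refine ⟨fun h => funext fun j => ?_, fun h => h ▸ sup_bot _⟩
  exact (Finset.sup_eq_bot_iff _ _).1 h j (mem_univ j)

theorem isCompact_univ_sup_eq_one : IsCompact {x : ι → ℝ≥0 | univ.sup x = 1} := by
  refine (isCompact_Icc (a := 0) (b := 1)).of_isClosed_subset
    (isClosed_eq continuous_univ_sup continuous_const) fun x hx => ?_
  exact ⟨fun _ => zero_le, fun j => (le_sup (f := x) (mem_univ j)).trans_eq hx⟩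

theorem exists_mem_univ_sup_eq_one {W : Set (ι → ℝ≥0)}
    (hsmul : ∀ r : ℝ≥0, ∀ x ∈ W, r • x ∈ W) (hne : ∃ x ∈ W, x ≠ 0) :
    ∃ x ∈ W, univ.sup x = 1 := by
  obtain ⟨x, hxW, hx0⟩ := hne
  refine ⟨(univ.sup x)⁻¹ • x, hsmul _ x hxW, ?_⟩
  rw [univ_sup_smul]
  exact inv_mul_cancel₀ (mt univ_sup_eq_zero_iff.1 hx0)

theorem exists_ne_zero_mem_iInter_of_closed_cones (W : ℕ → Set (ι → ℝ≥0))
    (hclosed : ∀ i, IsClosed (W i)) (hsmul : ∀ i, ∀ r : ℝ≥0, ∀ x ∈ W i, r • x ∈ W i)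
    (hne : ∀ i, ∃ x ∈ W i, x ≠ 0) (hdec : ∀ i, W (i + 1) ⊆ W i) :
    ∃ x ∈ ⋂ i, W i, x ≠ 0 := by
  set S := {x : ι → ℝ≥0 | univ.sup x = 1}
  obtain ⟨x, hx⟩ := IsCompact.nonempty_iInter_of_sequence_nonempty_isCompact_isClosed
    (fun i => W i ∩ S) (fun i => Set.inter_subset_inter_left _ (hdec i))
    (fun i => exists_mem_univ_sup_eq_one (hsmul i) (hne i))
    (isCompact_univ_sup_eq_one.inter_left (hclosed 0))
    (fun i => (hclosed i).inter (isClosed_eq continuous_univ_sup continuous_const))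
  simp only [Set.mem_iInter] at hx
  refine ⟨x, Set.mem_iInter.2 fun i => (hx i).1, fun h0 => ?_⟩
  have h1 : univ.sup x = 1 := (hx 0).2
  rw [univ_sup_eq_zero_iff.2 h0] at h1
  exact zero_ne_one h1

end SupNorm

theorem stmt0 {n : ℕ} (W : ℕ → Set (Fin n → ℝ≥0))
    (hclosed : ∀ i, IsClosed (W i))
    (hcone : ∀ i, MaxCone (W i))
    (hnontriv : ∀ i, ∃ x ∈ W i, x ≠ 0)
    (hdec : ∀ i, W (i + 1) ⊆ W i) :
    IsClosed (⋂ i, W i) ∧ MaxCone (⋂ i, W i) ∧ ∃ x ∈ ⋂ i, W i, x ≠ 0 :=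
  ⟨isClosed_iInter hclosed, MaxCone.iInter hcone,
    exists_ne_zero_mem_iInter_of_closed_cones W hclosed (fun i => (hcone i).2.2) hnontriv hdec⟩
end

section
/- Let A ∈ (ℝ≥0)^{n×n}, v ∈ (ℝ≥0)ⁿ, and t ≥ 1. If A^{⊗t} ⊗ v ≠ 0, then [v : A ⊗ v]^t ≤ [v : A^{⊗t} ⊗ v], where A^{⊗t} denotes the t-fold max-times matrix power and [x:y] = max{λ : λ·y ≤ x}. -/
open scoped NNReal

def maxMul {n : ℕ} (A : Matrix (Fin n) (Fin n) ℝ≥0) (v : Fin n → ℝ≥0) : Fin n → ℝ≥0 :=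
  fun i => Finset.univ.sup fun j => A i j * v j

def maxMatMul {n : ℕ} (A B : Matrix (Fin n) (Fin n) ℝ≥0) : Matrix (Fin n) (Fin n) ℝ≥0 :=
  fun i j => Finset.univ.sup fun k => A i k * B k j

def maxPow {n : ℕ} (A : Matrix (Fin n) (Fin n) ℝ≥0) : ℕ → Matrix (Fin n) (Fin n) ℝ≥0
  | 0 => 1
  | (t + 1) => maxMatMul A (maxPow A t)

noncomputable def bracket {n : ℕ} (v w : Fin n → ℝ≥0) : ℝ≥0 :=
  sSup {l : ℝ≥0 | l • w ≤ v}

/-! Writing `λ = [v : A ⊗ v]`, we have `λ • (A ⊗ v) ≤ v`. Applying the monotone, homogeneous map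
`A ⊗ ·` to `λ^t • (A^{⊗t} ⊗ v) ≤ v` and then using the first inequality gives
`λ^(t+1) • (A^{⊗(t+1)} ⊗ v) ≤ v`; since `[v : w]` is the largest scalar `l` with `l • w ≤ v`,
this bounds `λ^t` by `[v : A^{⊗t} ⊗ v]`. -/

variable {n : ℕ}

lemma maxMul_mono (A : Matrix (Fin n) (Fin n) ℝ≥0) {v w : Fin n → ℝ≥0} (h : v ≤ w) :
    maxMul A v ≤ maxMul A w := fun _ =>
  Finset.sup_mono_fun fun j _ => mul_le_mul_right (h j) _

lemma maxMul_smul (A : Matrix (Fin n) (Fin n) ℝ≥0) (c : ℝ≥0) (v : Fin n → ℝ≥0) :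
    maxMul A (c • v) = c • maxMul A v := by
  funext i
  simp only [maxMul, Pi.smul_apply, smul_eq_mul, NNReal.mul_finset_sup, mul_left_comm]

lemma maxMul_maxMatMul (A B : Matrix (Fin n) (Fin n) ℝ≥0) (v : Fin n → ℝ≥0) :
    maxMul (maxMatMul A B) v = maxMul A (maxMul B v) := by
  funext i
  simp only [maxMul, maxMatMul, NNReal.finset_sup_mul, NNReal.mul_finset_sup, mul_assoc]
  exact Finset.sup_comm _ _ _

lemma maxMul_one (v : Fin n → ℝ≥0) : maxMul 1 v = v := by
  funext i
  simp [maxMul, Matrix.one_apply, ite_mul, Finset.sup_ite, Finset.filter_eq]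

lemma maxMul_maxPow_succ (A : Matrix (Fin n) (Fin n) ℝ≥0) (v : Fin n → ℝ≥0) (t : ℕ) :
    maxMul (maxPow A (t + 1)) v = maxMul A (maxMul (maxPow A t) v) :=
  maxMul_maxMatMul A (maxPow A t) v

lemma bracket_smul_le (v w : Fin n → ℝ≥0) : bracket v w • w ≤ v := by
  intro i
  change bracket v w * w i ≤ v i
  rcases eq_or_ne (w i) 0 with hwi | hwi
  · simp [hwi]
  · rw [← le_div_iff₀ hwi.bot_lt]
    refine csSup_le ⟨0, by simp⟩ fun l hl => ?_
    rw [le_div_iff₀ hwi.bot_lt]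
    exact hl i

lemma le_bracket_of_smul_le {v w : Fin n → ℝ≥0} (hw : w ≠ 0) {l : ℝ≥0} (hl : l • w ≤ v) :
    l ≤ bracket v w := by
  obtain ⟨i, hwi⟩ : ∃ i, w i ≠ 0 := Function.ne_iff.mp hw
  refine le_csSup ⟨v i / w i, fun m hm => ?_⟩ hl
  rw [le_div_iff₀ hwi.bot_lt]
  exact hm i

lemma bracket_pow_smul_maxMul_maxPow_le (A : Matrix (Fin n) (Fin n) ℝ≥0) (v : Fin n → ℝ≥0)
    (t : ℕ) : bracket v (maxMul A v) ^ t • maxMul (maxPow A t) v ≤ v := by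
  set l := bracket v (maxMul A v)
  induction t with
  | zero => simp [maxPow, maxMul_one]
  | succ t ih =>
    calc l ^ (t + 1) • maxMul (maxPow A (t + 1)) v
        = l • maxMul A (l ^ t • maxMul (maxPow A t) v) := by
          rw [maxMul_smul, maxMul_maxPow_succ, smul_smul, pow_succ']
      _ ≤ l • maxMul A v := smul_le_smul_of_nonneg_left (maxMul_mono A ih) zero_le
      _ ≤ v := bracket_smul_le v (maxMul A v)

theorem stmt8_general {n : ℕ} (A : Matrix (Fin n) (Fin n) ℝ≥0) (v : Fin n → ℝ≥0)
    (t : ℕ) (hne : maxMul (maxPow A t) v ≠ 0) :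
    bracket v (maxMul A v) ^ t ≤ bracket v (maxMul (maxPow A t) v) :=
  le_bracket_of_smul_le hne (bracket_pow_smul_maxMul_maxPow_le A v t)

theorem stmt8 {n : ℕ} (A : Matrix (Fin n) (Fin n) ℝ≥0) (v : Fin n → ℝ≥0)
    (t : ℕ) (ht : 1 ≤ t) (hne : maxMul (maxPow A t) v ≠ 0) :
    bracket v (maxMul A v) ^ t ≤ bracket v (maxMul (maxPow A t) v) :=
  stmt8_general A v t hne
end

section
/- Let A ∈ (ℝ≥0)^{n×n}, v ∈ (ℝ≥0)ⁿ nonzero, and suppose A^{⊗ℓ} ⊗ v ≠ 0 for all ℓ ≥ 1. Fix t ≥ 1 and set r = [v : A^{⊗t} ⊗ v]^{1/t}. Then the sequence {r^ℓ · A^{⊗ℓ} ⊗ v}_{ℓ≥0} is bounded above in (ℝ≥0)ⁿ; in fact r^ℓ · A^{⊗ℓ} ⊗ v ≤ max_{0≤q<t} [v:A^{⊗t}⊗v]^{q/t} · A^{⊗q} ⊗ v for all ℓ. -/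
open scoped NNReal

/-!
Put `c = [v : A^{⊗t} ⊗ v]^{1/t}`, so that `c^t · A^{⊗t} ⊗ v ≤ v`. Since `A ⊗ -` is monotone
and homogeneous, applying `A^{⊗(q + tk)}` to this inequality gives
`c^{q + t(k+1)} · A^{⊗(q + t(k+1))} ⊗ v ≤ c^{q + tk} · A^{⊗(q + tk)} ⊗ v`, so every term
`c^ℓ · A^{⊗ℓ} ⊗ v` with `ℓ = q + tk`, `q < t`, is dominated by the term of index `q`.
-/

section MaxTimes

variable {n : ℕ}

lemma maxMul_maxPow_add (A : Matrix (Fin n) (Fin n) ℝ≥0) (a b : ℕ) (v : Fin n → ℝ≥0) :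
    maxMul (maxPow A (a + b)) v = maxMul (maxPow A a) (maxMul (maxPow A b) v) := by
  induction a with
  | zero => simp [maxPow, maxMul_one]
  | succ a ih =>
    rw [Nat.add_right_comm, maxPow, maxPow, maxMul_maxMatMul, ih, maxMul_maxMatMul]

variable (A : Matrix (Fin n) (Fin n) ℝ≥0) (v : Fin n → ℝ≥0) {c : ℝ≥0} {t : ℕ}

lemma pow_smul_maxMul_maxPow_add_mul_le (h : c ^ t • maxMul (maxPow A t) v ≤ v) (q k : ℕ) :
    c ^ (q + t * k) • maxMul (maxPow A (q + t * k)) v ≤ c ^ q • maxMul (maxPow A q) v := by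
  induction k with
  | zero => simp
  | succ k ih =>
    calc c ^ (q + t * (k + 1)) • maxMul (maxPow A (q + t * (k + 1))) v
        = c ^ (q + t * k) • maxMul (maxPow A (q + t * k)) (c ^ t • maxMul (maxPow A t) v) := by
          rw [mul_add_one, ← add_assoc, maxMul_maxPow_add, maxMul_smul, smul_smul, pow_add]
      _ ≤ c ^ (q + t * k) • maxMul (maxPow A (q + t * k)) v :=
          smul_le_smul_of_nonneg_left (maxMul_mono _ h) zero_le
      _ ≤ c ^ q • maxMul (maxPow A q) v := ih

lemma pow_smul_maxMul_maxPow_le_sup (ht : 0 < t) (h : c ^ t • maxMul (maxPow A t) v ≤ v)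
    (l : ℕ) : c ^ l • maxMul (maxPow A l) v ≤ fun j =>
      (Finset.range t).sup fun q => c ^ q * maxMul (maxPow A q) v j := by
  intro j
  rw [← Nat.mod_add_div l t]
  exact (pow_smul_maxMul_maxPow_add_mul_le A v h _ _ j).trans <|
    Finset.le_sup (f := fun q => c ^ q * maxMul (maxPow A q) v j)
      (Finset.mem_range.mpr (Nat.mod_lt l ht))

end MaxTimes

theorem stmt11_general {n : ℕ} (A : Matrix (Fin n) (Fin n) ℝ≥0) (v : Fin n → ℝ≥0)
    (t : ℕ) (ht : 1 ≤ t) (r : ℝ≥0)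
    (hr : r = bracket v (maxMul (maxPow A t) v) ^ ((1 : ℝ) / t)) :
    (∃ b : Fin n → ℝ≥0, ∀ l : ℕ, r ^ l • maxMul (maxPow A l) v ≤ b) ∧
    (∀ l : ℕ, r ^ l • maxMul (maxPow A l) v ≤ fun j =>
      (Finset.range t).sup fun q =>
        bracket v (maxMul (maxPow A t) v) ^ ((q : ℝ) / t) * maxMul (maxPow A q) v j) := by
  set C := bracket v (maxMul (maxPow A t) v)
  have hr_pow : ∀ q : ℕ, r ^ q = C ^ ((q : ℝ) / t) := fun q => by
    rw [hr, ← NNReal.rpow_natCast, ← NNReal.rpow_mul, one_div_mul_eq_div]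
  have hr_pow_t : r ^ t = C := by
    rw [hr_pow, div_self (by positivity), NNReal.rpow_one]
  have key := pow_smul_maxMul_maxPow_le_sup A v ht (by rw [hr_pow_t]; exact bracket_smul_le _ _)
  simp only [hr_pow] at key ⊢
  exact ⟨⟨_, key⟩, key⟩

theorem stmt11 {n : ℕ} (A : Matrix (Fin n) (Fin n) ℝ≥0) (v : Fin n → ℝ≥0)
    (hv : v ≠ 0) (hpow : ∀ l : ℕ, 1 ≤ l → maxMul (maxPow A l) v ≠ 0)
    (t : ℕ) (ht : 1 ≤ t) (r : ℝ≥0)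
    (hr : r = bracket v (maxMul (maxPow A t) v) ^ ((1 : ℝ) / t)) :
    (∃ b : Fin n → ℝ≥0, ∀ l : ℕ, r ^ l • maxMul (maxPow A l) v ≤ b) ∧
    (∀ l : ℕ, r ^ l • maxMul (maxPow A l) v ≤ fun j =>
      (Finset.range t).sup fun q =>
        bracket v (maxMul (maxPow A t) v) ^ ((q : ℝ) / t) * maxMul (maxPow A q) v j) :=
  stmt11_general A v t ht r hr
end

section
/- Let W ⊆ (ℝ≥0)ⁿ be a closed max cone with a nonzero vector, invariant under multiplication by a nonnegative matrix A in the ordinary (sum-product) sense: Av ∈ W for all v ∈ W. Then A has an eigenvector in W: there exist nonzero u ∈ W and λ ≥ 0 with Au = λu. (Here W, being a max cone, is in particular a closed cone under scalar multiplication; the statement is the Perron–Frobenius theorem for closed cones applied to W's convex hull, or can be stated for any closed convex cone C ⊆ (ℝ≥0)ⁿ with C ≠ {0}, AC ⊆ C.) -/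
/-!
Fix `x ∈ C`, `x ≠ 0`, and let `R` be the radius of convergence of `∑ₖ |Aᵏ x| βᵏ`, where `|·|` is the
sum of the coordinates. For `β < R` the Neumann series `y = ∑ₖ βᵏ Aᵏ x` lies in `C` and satisfies
`x + β A y = y`, hence `Aᵏ x + β A (Aᵏ y) = Aᵏ y` for all `k`.
If `R = ∞`, then `|A y| ≤ |y| / β`, so normalized limits of `y` as `β → ∞` lie in the kernel of `A`.
Otherwise, for `β < R` close to `R` some `k` makes `|Aᵏ x|` negligible against `|Aᵏ y|`: if not,
`|Aᵏ y|` would decay geometrically fast enough to push the radius of convergence beyond `R`.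
Then `Aᵏ y / |Aᵏ y|` is an approximate eigenvector for `1 / β`, and compactness of the slice
`{v ∈ C | |v| = 1}` produces an eigenvector for `1 / R`.
-/

open scoped NNReal Matrix
open Filter Topology

namespace ConeEigenvector

variable {ι : Type*} [Fintype ι] {K : Submodule ℝ≥0 (ι → ℝ≥0)}

lemma tendsto_zero_of_tendsto_sum {f : ℕ → ι → ℝ≥0}
    (h : Tendsto (fun j => ∑ i, f j i) atTop (𝓝 0)) : Tendsto f atTop (𝓝 0) :=
  tendsto_pi_nhds.2 fun i => tendsto_of_tendsto_of_tendsto_of_le_of_le tendsto_const_nhds h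
    (fun _ => zero_le) fun _ => Finset.single_le_sum (fun _ _ => zero_le) (Finset.mem_univ i)

lemma isCompact_inter_sum_eq_one {C : Set (ι → ℝ≥0)} (hC : IsClosed C) :
    IsCompact (C ∩ {v | ∑ i, v i = 1}) := by
  refine (isCompact_univ_pi fun _ => isCompact_Icc (a := (0 : ℝ≥0)) (b := 1)).of_isClosed_subset
    (hC.inter (isClosed_eq (by fun_prop) continuous_const)) ?_
  rintro v ⟨-, hv⟩ i -
  exact ⟨zero_le, hv ▸ Finset.single_le_sum (fun _ _ => zero_le) (Finset.mem_univ i)⟩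

variable (A : Matrix ι ι ℝ≥0)

lemma continuous_mulVec : Continuous (A *ᵥ ·) :=
  continuous_const.matrix_mulVec continuous_id

lemma sum_mulVec_le (v : ι → ℝ≥0) :
    ∑ i, (A *ᵥ v) i ≤ (∑ i, ∑ j, A i j) * ∑ i, v i := by
  simp only [Matrix.mulVec, dotProduct, Finset.sum_mul]
  gcongr with i _ j _
  exact Finset.single_le_sum (fun _ _ => zero_le) (Finset.mem_univ j)

lemma exists_eigenvector_of_tendsto {C : Set (ι → ℝ≥0)} (hC : IsClosed C)
    {w ε : ℕ → ι → ℝ≥0} {μ : ℕ → ℝ≥0} {m : ℝ≥0} (hwC : ∀ j, w j ∈ C)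
    (hw : ∀ j, ∑ i, w j i = 1) (hε : Tendsto ε atTop (𝓝 0)) (hμ : Tendsto μ atTop (𝓝 m))
    (heq : ∀ j, ε j + A *ᵥ w j = μ j • w j) :
    ∃ u ∈ C, u ≠ 0 ∧ A *ᵥ u = m • u := by
  obtain ⟨u, ⟨huC, hu⟩, φ, hφ, hlim⟩ :=
    (isCompact_inter_sum_eq_one hC).tendsto_subseq fun j => ⟨hwC j, hw j⟩
  refine ⟨u, huC, fun h => by simp [h] at hu, tendsto_nhds_unique (f := fun j => μ (φ j) • w (φ j))
    ?_ ((hμ.comp hφ.tendsto_atTop).smul hlim)⟩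
  have hAw := (hε.comp hφ.tendsto_atTop).add (((continuous_mulVec A).tendsto u).comp hlim)
  simpa [heq] using hAw

variable {A}

lemma exists_eigenvector_of_add_smul_mulVec_eq (hK : IsClosed (K : Set (ι → ℝ≥0)))
    {v z : ℕ → ι → ℝ≥0} {β δ : ℕ → ℝ≥0} {m : ℝ≥0}
    (hzK : ∀ j, z j ∈ K) (hβ : ∀ j, β j ≠ 0) (hrel : ∀ j, v j + β j • A *ᵥ z j = z j)
    (hz : ∀ j, ∑ i, z j i ≠ 0) (hvz : ∀ j, ∑ i, v j i ≤ δ j * ∑ i, z j i)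
    (hβm : Tendsto (fun j => (β j)⁻¹) atTop (𝓝 m))
    (hδ : Tendsto (fun j => (β j)⁻¹ * δ j) atTop (𝓝 0)) :
    ∃ u ∈ K, u ≠ 0 ∧ A *ᵥ u = m • u := by
  set s := fun j => ∑ i, z j i
  refine exists_eigenvector_of_tendsto A hK (w := fun j => (s j)⁻¹ • z j)
    (ε := fun j => ((β j)⁻¹ * (s j)⁻¹) • v j) (fun j => K.smul_mem _ (hzK j))
    (fun j => by simp [← Finset.mul_sum, s, hz j]) ?_ hβm fun j => ?_
  · refine tendsto_zero_of_tendsto_sum <| tendsto_of_tendsto_of_tendsto_of_le_of_le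
      tendsto_const_nhds hδ (fun _ => zero_le) fun j => ?_
    calc ∑ i, (((β j)⁻¹ * (s j)⁻¹) • v j) i = (β j)⁻¹ * (s j)⁻¹ * ∑ i, v j i := by
          simp [Finset.mul_sum]
      _ ≤ (β j)⁻¹ * (s j)⁻¹ * (δ j * s j) := by gcongr; exact hvz j
      _ = (β j)⁻¹ * δ j := by rw [mul_comm (δ j), mul_assoc, inv_mul_cancel_left₀ (hz j)]
  · calc ((β j)⁻¹ * (s j)⁻¹) • v j + A *ᵥ (s j)⁻¹ • z j
        = ((β j)⁻¹ * (s j)⁻¹) • (v j + β j • A *ᵥ z j) := by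
          rw [Matrix.mulVec_smul, smul_add, smul_smul, mul_right_comm, inv_mul_cancel₀ (hβ j),
            one_mul]
      _ = (β j)⁻¹ • (s j)⁻¹ • z j := by rw [hrel, smul_smul]

variable [DecidableEq ι] (A)

lemma pow_mulVec_mem (hAK : ∀ v ∈ K, A *ᵥ v ∈ K)
    {x : ι → ℝ≥0} (hx : x ∈ K) (k : ℕ) : A ^ k *ᵥ x ∈ K := by
  induction k with
  | zero => simpa using hx
  | succ k ih => rw [pow_succ', ← Matrix.mulVec_mulVec]; exact hAK _ ih

lemma sum_pow_mulVec_le (x : ι → ℝ≥0) (k : ℕ) :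
    ∑ i, (A ^ k *ᵥ x) i ≤ (∑ i, ∑ j, A i j) ^ k * ∑ i, x i := by
  induction k with
  | zero => simp
  | succ k ih =>
    rw [pow_succ', ← Matrix.mulVec_mulVec, pow_succ', mul_assoc]
    exact (sum_mulVec_le A _).trans (by gcongr)

lemma exists_pos_summable (x : ι → ℝ≥0) :
    ∃ β : ℝ≥0, 0 < β ∧ Summable fun k => (∑ i, (A ^ k *ᵥ x) i) * β ^ k := by
  set M := ∑ i, ∑ j, A i j
  have hM : M * (M + 1)⁻¹ < 1 := by
    rw [← div_eq_mul_inv, div_lt_one (by positivity)]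
    exact lt_add_one M
  refine ⟨(M + 1)⁻¹, by positivity, NNReal.summable_of_le (fun k => ?_)
    ((NNReal.summable_geometric hM).mul_left (∑ i, x i))⟩
  calc (∑ i, (A ^ k *ᵥ x) i) * (M + 1)⁻¹ ^ k ≤ M ^ k * (∑ i, x i) * (M + 1)⁻¹ ^ k := by
        gcongr; exact sum_pow_mulVec_le A x k
    _ = (∑ i, x i) * (M * (M + 1)⁻¹) ^ k := by ring

noncomputable def neumannSeries (β : ℝ≥0) (x : ι → ℝ≥0) : ι → ℝ≥0 :=
  ∑' k, β ^ k • (A ^ k *ᵥ x)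

variable {A} {β : ℝ≥0} {x : ι → ℝ≥0}

lemma summable_smul_pow_mulVec (h : Summable fun k => (∑ i, (A ^ k *ᵥ x) i) * β ^ k) :
    Summable fun k => β ^ k • (A ^ k *ᵥ x) :=
  Pi.summable.2 fun i => NNReal.summable_of_le (fun k => by
    rw [Pi.smul_apply, smul_eq_mul, mul_comm]
    gcongr
    exact Finset.single_le_sum (fun _ _ => zero_le) (Finset.mem_univ i)) h

lemma neumannSeries_mem (hK : IsClosed (K : Set (ι → ℝ≥0)))
    (hAK : ∀ v ∈ K, A *ᵥ v ∈ K) (hx : x ∈ K)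
    (h : Summable fun k => (∑ i, (A ^ k *ᵥ x) i) * β ^ k) : neumannSeries A β x ∈ K :=
  hK.mem_of_tendsto (summable_smul_pow_mulVec h).hasSum.tendsto_sum_nat <|
    Eventually.of_forall fun _ => K.sum_mem fun k _ => K.smul_mem _ (pow_mulVec_mem A hAK hx k)

lemma add_smul_mulVec_neumannSeries (h : Summable fun k => (∑ i, (A ^ k *ᵥ x) i) * β ^ k) :
    x + β • A *ᵥ neumannSeries A β x = neumannSeries A β x := by
  unfold neumannSeries
  have hN := (summable_smul_pow_mulVec h).hasSum
  have hshift : HasSum (fun k => β ^ (k + 1) • (A ^ (k + 1) *ᵥ x))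
      (β • A *ᵥ ∑' k, β ^ k • (A ^ k *ᵥ x)) := by
    convert (hN.map (Matrix.mulVecLin A) (continuous_mulVec A)).const_smul β using 1
    · ext1 k
      rw [Function.comp_apply, Matrix.mulVecLin_apply, Matrix.mulVec_smul, Matrix.mulVec_mulVec,
        smul_smul, pow_succ', pow_succ']
    · rfl
  simpa using hshift.zero_add.unique hN

lemma pow_mulVec_add_smul_mulVec_eq {y : ι → ℝ≥0} (h : x + β • A *ᵥ y = y) (k : ℕ) :
    A ^ k *ᵥ x + β • A *ᵥ (A ^ k *ᵥ y) = A ^ k *ᵥ y := by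
  conv_rhs => rw [← h]
  rw [Matrix.mulVec_add, Matrix.mulVec_smul, Matrix.mulVec_mulVec, Matrix.mulVec_mulVec,
    (Commute.self_pow A k).eq]

lemma exists_lt_mul_of_not_summable {a T : ℕ → ℝ≥0} {β γ δ : ℝ≥0}
    (hrec : ∀ k, a k + β * T (k + 1) = T k) (hγ : (1 - δ) * γ < β)
    (hns : ¬ Summable fun k => a k * γ ^ k) : ∃ k, a k < δ * T k := by
  by_contra! h
  have hβ : 0 < β := pos_of_gt hγ
  set q := (1 - δ) * γ / β
  have hq : q < 1 := (div_lt_one hβ).2 hγ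
  have hstep : ∀ k, γ * T (k + 1) ≤ q * T k := by
    intro k
    have hβT : β * T (k + 1) ≤ (1 - δ) * T k := by
      rw [tsub_mul, one_mul]
      refine le_tsub_of_add_le_right ?_
      calc β * T (k + 1) + δ * T k ≤ β * T (k + 1) + a k := by gcongr; exact h k
        _ = T k := by rw [add_comm, hrec]
    calc γ * T (k + 1) = γ / β * (β * T (k + 1)) := by field_simp
      _ ≤ γ / β * ((1 - δ) * T k) := by gcongr
      _ = q * T k := by simp only [q]; ring
  have hgeom : ∀ k, T k * γ ^ k ≤ T 0 * q ^ k := by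
    intro k
    induction k with
    | zero => simp
    | succ k ih =>
      calc T (k + 1) * γ ^ (k + 1) = γ * T (k + 1) * γ ^ k := by ring
        _ ≤ q * T k * γ ^ k := by gcongr ?_ * _; exact hstep k
        _ = q * (T k * γ ^ k) := by ring
        _ ≤ q * (T 0 * q ^ k) := by gcongr
        _ = T 0 * q ^ (k + 1) := by ring
  refine hns (NNReal.summable_of_le (fun k => ?_) ((NNReal.summable_geometric hq).mul_left (T 0)))
  calc a k * γ ^ k ≤ T k * γ ^ k := by gcongr; exact le_self_add.trans (hrec k).le
    _ ≤ T 0 * q ^ k := hgeom k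

lemma exists_mulVec_eq_zero_of_forall_summable (hK : IsClosed (K : Set (ι → ℝ≥0)))
    (hAK : ∀ v ∈ K, A *ᵥ v ∈ K) (hx : x ∈ K) (hx0 : x ≠ 0)
    (h : ∀ β : ℝ≥0, Summable fun k => (∑ i, (A ^ k *ᵥ x) i) * β ^ k) :
    ∃ u ∈ K, u ≠ 0 ∧ A *ᵥ u = 0 := by
  set β : ℕ → ℝ≥0 := fun j => j + 1
  have hrel : ∀ j, x + β j • A *ᵥ neumannSeries A (β j) x = neumannSeries A (β j) x :=
    fun j => add_smul_mulVec_neumannSeries (h (β j))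
  have hxz : ∀ j, ∑ i, x i ≤ 1 * ∑ i, neumannSeries A (β j) x i := fun j => by
    rw [one_mul]
    exact Finset.sum_le_sum fun i _ => (le_self_add.trans_eq (hrel j) : x ≤ _) i
  have hx' : ∑ i, x i ≠ 0 := fun h0 =>
    hx0 (funext fun i => Finset.sum_eq_zero_iff.1 h0 i (Finset.mem_univ i))
  have hβ : Tendsto (fun j => (β j)⁻¹) atTop (𝓝 0) :=
    tendsto_inv_atTop_zero.comp (tendsto_atTop_mono (fun _ => le_self_add)
      tendsto_natCast_atTop_atTop)
  obtain ⟨u, huK, hu0, hu⟩ := exists_eigenvector_of_add_smul_mulVec_eq hK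
    (fun j => neumannSeries_mem hK hAK hx (h (β j))) (fun j => by positivity) hrel
    (fun j => (pos_iff_ne_zero.2 hx').trans_le (by simpa using hxz j) |>.ne') hxz hβ
    (by simpa using hβ)
  exact ⟨u, huK, hu0, by simpa using hu⟩

lemma exists_eigenvector_of_not_summable (hK : IsClosed (K : Set (ι → ℝ≥0)))
    (hAK : ∀ v ∈ K, A *ᵥ v ∈ K) (hx : x ∈ K) {γ₀ : ℝ≥0}
    (hγ₀ : ¬ Summable fun k => (∑ i, (A ^ k *ᵥ x) i) * γ₀ ^ k) :
    ∃ u ∈ K, u ≠ 0 ∧ ∃ lam : ℝ≥0, A *ᵥ u = lam • u := by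
  set S := {β : ℝ≥0 | Summable fun k => (∑ i, (A ^ k *ᵥ x) i) * β ^ k}
  have hS_of_le : ∀ β ∈ S, ∀ γ ≤ β, γ ∈ S := fun β hβ γ hγ =>
    NNReal.summable_of_le (fun k => by gcongr) hβ
  have hbdd : BddAbove S := ⟨γ₀, fun β hβ => not_lt.1 fun h => hγ₀ (hS_of_le β hβ γ₀ h.le)⟩
  set R := sSup S
  obtain ⟨β₀, hβ₀, hβ₀S⟩ := exists_pos_summable A x
  have hR : 0 < R := hβ₀.trans_le (le_csSup hbdd hβ₀S)
  have hlt : ∀ β < R, β ∈ S := fun β h => by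
    obtain ⟨β', hβ', h'⟩ := exists_lt_of_lt_csSup ⟨β₀, hβ₀S⟩ h
    exact hS_of_le β' hβ' β h'.le
  have hgt : ∀ γ, R < γ → γ ∉ S := fun γ h hγ => (le_csSup hbdd hγ).not_gt h
  obtain ⟨t, -, ht, htlim⟩ := exists_seq_strictMono_tendsto' (zero_lt_one' ℝ≥0)
  have hS : ∀ j, t j * R ∈ S := fun j => hlt _ (mul_lt_of_lt_one_left hR (ht j).2)
  have hrel := fun j => pow_mulVec_add_smul_mulVec_eq (add_smul_mulVec_neumannSeries (hS j))
  have hsmall : ∀ j, ∃ k, ∑ i, (A ^ k *ᵥ x) i <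
      (1 - t j ^ 3) * ∑ i, (A ^ k *ᵥ neumannSeries A (t j * R) x) i := by
    intro j
    obtain ⟨ht0, ht1⟩ := ht j
    refine exists_lt_mul_of_not_summable (β := t j * R) (γ := R / t j) (fun k => ?_) ?_
      (hgt _ ((lt_div_iff₀ ht0).2 (mul_lt_of_lt_one_right hR ht1)))
    · simpa [Finset.sum_add_distrib, Finset.mul_sum, Matrix.mulVec_mulVec, pow_succ'] using
        congrArg (fun v => ∑ i, v i) (hrel j k)
    · rw [tsub_tsub_cancel_of_le (pow_le_one₀ ht0.le ht1.le)]
      calc t j ^ 3 * (R / t j) = t j ^ 2 * R := by field_simp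
        _ < t j * R := by gcongr; exact pow_lt_self_of_lt_one₀ ht0 ht1 one_lt_two
  choose k hk using hsmall
  have hinv : Tendsto (fun j => (t j * R)⁻¹) atTop (𝓝 R⁻¹) := by
    simpa using (htlim.mul_const R).inv₀ (by simpa using hR.ne')
  have hδ : Tendsto (fun j => (t j * R)⁻¹ * (1 - t j ^ 3)) atTop (𝓝 0) := by
    simpa using hinv.mul ((tendsto_const_nhds (x := (1 : ℝ≥0))).sub (htlim.pow 3))
  obtain ⟨u, huK, hu0, hu⟩ := exists_eigenvector_of_add_smul_mulVec_eq hK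
    (fun j => pow_mulVec_mem A hAK (neumannSeries_mem hK hAK hx (hS j)) (k j))
    (fun j => (mul_pos (ht j).1 hR).ne') (fun j => hrel j (k j))
    (fun j => right_ne_zero_of_mul (pos_of_gt (hk j)).ne') (fun j => (hk j).le) hinv hδ
  exact ⟨u, huK, hu0, R⁻¹, hu⟩

end ConeEigenvector

theorem stmt13 {n : ℕ} (A : Matrix (Fin n) (Fin n) ℝ≥0) (C : Set (Fin n → ℝ≥0))
    (hadd : ∀ x ∈ C, ∀ y ∈ C, x + y ∈ C)
    (hsmul : ∀ r : ℝ≥0, ∀ x ∈ C, r • x ∈ C)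
    (hcl : IsClosed C) (hnz : ∃ x ∈ C, x ≠ 0)
    (hinv : ∀ v ∈ C, A.mulVec v ∈ C) :
    ∃ u ∈ C, u ≠ 0 ∧ ∃ lam : ℝ≥0, A.mulVec u = lam • u := by
  obtain ⟨x, hxC, hx0⟩ := hnz
  let K : Submodule ℝ≥0 (Fin n → ℝ≥0) :=
    { carrier := C
      add_mem' := fun ha hb => hadd _ ha _ hb
      zero_mem' := by simpa using hsmul 0 x hxC
      smul_mem' := hsmul }
  by_cases h : ∀ β : ℝ≥0, Summable fun k => (∑ i, (A ^ k *ᵥ x) i) * β ^ k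
  · obtain ⟨u, huC, hu0, hAu⟩ :=
      ConeEigenvector.exists_mulVec_eq_zero_of_forall_summable (K := K) hcl hinv hxC hx0 h
    exact ⟨u, huC, hu0, 0, by rw [zero_smul]; exact hAu⟩
  · obtain ⟨γ₀, hγ₀⟩ := not_forall.1 h
    exact ConeEigenvector.exists_eigenvector_of_not_summable (K := K) hcl hinv hxC hγ₀
end
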